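/- Let λ ∈ (0,1) and θ ∈ (0,1) with θ ≠ 1/2, and let c be the unique zero of f(c) = (c/((2θ−1+2cθ)(2−2θ−c(2θ−1))))^((1−θ)/(θ−1/2)) − (2θ−1+2cθ)²/(1−λ) in the interval I(θ), where I(θ) = ((1−θ)/θ, ∞) for θ ∈ (0,1/2) and I(θ) = ((1−θ)/θ, (1−θ)/(θ−1/2)) for θ ∈ (1/2,1). Then the base B := c/((2θ−1+2cθ)(2−2θ−c(2θ−1))) satisfies B ∈ (0,1) if θ ∈ (0,1/2) and B ∈ (1,∞) if θ ∈ (1/2,1); consequently s̄ := B^(1/(2θ−1)) satisfies s̄ > 1 and c/s̄ > 0. -/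
import Mathlib


open Real

/-- The interval `I(θ)` in which the root `c` of `f` is located. -/
noncomputable def noTradeInterval (θ : ℝ) : Set ℝ :=
  if θ < 1/2 then Set.Ioi ((1 - θ)/θ)
  else if θ < 1 then Set.Ioo ((1 - θ)/θ) ((1 - θ)/(θ - 1/2))
  else Set.Ioo ((1 - θ)/θ) 0

theorem growth_optimal_sbar_welldefined_theta_lt_one
    (lam θ c B sbar : ℝ)
    (hlam : lam ∈ Set.Ioo (0:ℝ) 1) (hθ : θ ∈ Set.Ioo (0:ℝ) 1) (hθhalf : θ ≠ 1/2)
    (hcI : c ∈ noTradeInterval θ)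
    (hfc : (c / ((2*θ - 1 + 2*c*θ) * (2 - 2*θ - c*(2*θ - 1)))) ^ ((1 - θ)/(θ - 1/2))
        - (2*θ - 1 + 2*c*θ)^2 / (1 - lam) = 0)
    (hB : B = c / ((2*θ - 1 + 2*c*θ) * (2 - 2*θ - c*(2*θ - 1))))
    (hsbar : sbar = B ^ (1/(2*θ - 1))) :
    (θ < 1/2 → B ∈ Set.Ioo (0:ℝ) 1) ∧ (1/2 < θ → B ∈ Set.Ioi (1:ℝ)) ∧
      1 < sbar ∧ 0 < c / sbar := by
  obtain ⟨hlam0, hlam1⟩ := hlam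
  obtain ⟨hθ0, hθ1⟩ := hθ
  rcases lt_or_gt_of_ne hθhalf with hlt | hgt
  · -- θ < 1/2
    have hc : (1 - θ)/θ < c := by
      have := hcI
      simp only [noTradeInterval, if_pos hlt, Set.mem_Ioi] at this
      exact this
    have hc' : 1 - θ < c * θ := (div_lt_iff₀ hθ0).mp hc
    have hcpos : 0 < c := lt_trans (div_pos (by linarith) hθ0) hc
    have hD1 : 1 < 2*θ - 1 + 2*c*θ := by nlinarith
    have hD2 : 0 < 2 - 2*θ - c*(2*θ - 1) := by nlinarith
    have hBpos : 0 < B := by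
      rw [hB]; exact div_pos hcpos (mul_pos (by linarith) hD2)
    have hBa : B ^ ((1 - θ)/(θ - 1/2)) = (2*θ - 1 + 2*c*θ)^2 / (1 - lam) := by
      rw [hB]; linarith [hfc]
    have h1 : 1 < B ^ ((1 - θ)/(θ - 1/2)) := by
      rw [hBa, one_lt_div (by linarith)]; nlinarith
    have haneg : (1 - θ)/(θ - 1/2) < 0 :=
      div_neg_of_pos_of_neg (by linarith) (by linarith)
    have hBlt1 : B < 1 := by
      rcases (Real.one_lt_rpow_iff_of_pos hBpos).mp h1 with ⟨_, h⟩ | ⟨h, _⟩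
      · linarith
      · exact h
    have hsb : 1 < sbar := by
      rw [hsbar]
      exact (Real.one_lt_rpow_iff_of_pos hBpos).mpr
        (Or.inr ⟨hBlt1, div_neg_of_pos_of_neg one_pos (by linarith)⟩)
    exact ⟨fun _ => ⟨hBpos, hBlt1⟩, fun h => absurd h (by linarith),
      hsb, div_pos hcpos (by linarith)⟩
  · -- 1/2 < θ
    have hc : c ∈ Set.Ioo ((1 - θ)/θ) ((1 - θ)/(θ - 1/2)) := by
      have := hcI
      simp only [noTradeInterval, if_neg (not_lt.mpr hgt.le), if_pos hθ1] at this
      exact this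
    obtain ⟨hc1, hc2⟩ := hc
    have hc' : 1 - θ < c * θ := (div_lt_iff₀ hθ0).mp hc1
    have hc'' : c * (θ - 1/2) < 1 - θ := (lt_div_iff₀ (by linarith)).mp hc2
    have hcpos : 0 < c := lt_trans (div_pos (by linarith) hθ0) hc1
    have hD1 : 1 < 2*θ - 1 + 2*c*θ := by nlinarith
    have hD2 : 0 < 2 - 2*θ - c*(2*θ - 1) := by nlinarith
    have hBpos : 0 < B := by
      rw [hB]; exact div_pos hcpos (mul_pos (by linarith) hD2)
    have hBa : B ^ ((1 - θ)/(θ - 1/2)) = (2*θ - 1 + 2*c*θ)^2 / (1 - lam) := by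
      rw [hB]; linarith [hfc]
    have h1 : 1 < B ^ ((1 - θ)/(θ - 1/2)) := by
      rw [hBa, one_lt_div (by linarith)]; nlinarith
    have hapos : 0 < (1 - θ)/(θ - 1/2) := div_pos (by linarith) (by linarith)
    have hBgt1 : 1 < B := by
      rcases (Real.one_lt_rpow_iff_of_pos hBpos).mp h1 with ⟨h, _⟩ | ⟨_, h⟩
      · exact h
      · linarith
    have hsb : 1 < sbar := by
      rw [hsbar]
      exact (Real.one_lt_rpow_iff_of_pos hBpos).mpr
        (Or.inl ⟨hBgt1, by apply div_pos one_pos; linarith⟩)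
    exact ⟨fun h => absurd h (by linarith), fun _ => hBgt1,
      hsb, div_pos hcpos (by linarith)⟩
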